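/- For every set T ⊆ ℕ^{<ℕ} there is a ∧-embedding π : ℕ^{<ℕ} → ℕ^{<ℕ} such that the image of π is contained in T or the image of π is contained in the complement of T. -/
import Mathlib


open Set Topology TopologicalSpace
open scoped ENNReal

/-- `t` is an initial segment of `b : ℕ → ℕ`. -/
def PrefixFun (t : List ℕ) (b : ℕ → ℕ) : Prop :=
  ∀ (i : ℕ) (h : i < t.length), t.get ⟨i, h⟩ = b i

/-- The meet `s ∧ t`: the longest common initial segment of two finite sequences. -/
def listMeet : List ℕ → List ℕ → List ℕ
  | a :: s, b :: t => if a = b then a :: listMeet s t else []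
  | _, _ => []

/-- A `∧`-embedding: an injection preserving meets. -/
def MeetEmbedding (π : List ℕ → List ℕ) : Prop :=
  Function.Injective π ∧ ∀ s t, π (listMeet s t) = listMeet (π s) (π t)

/-- The induced map on Baire space: `limSeq π b = ⋃ i, π (b ↾ i)`. -/
def limSeq (π : List ℕ → List ℕ) (b : ℕ → ℕ) : ℕ → ℕ := fun n =>
  (π (List.ofFn fun i : Fin (n + 1) => b i)).getD n 0

/-- Points of the space `ℕ^{≤ℕ}_*`: finite sequences, infinite sequences, and
finite sequences followed by `∞`. -/
inductive NStar : Type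
  | fin : List ℕ → NStar
  | inf : (ℕ → ℕ) → NStar
  | lim : List ℕ → NStar

namespace NStar

/-- `t ⊑ c`. -/
def PrefixOf (t : List ℕ) : NStar → Prop
  | fin s => t <+: s
  | inf b => PrefixFun t b
  | lim s => t <+: s

/-- The basic "cylinder" `N_t = {c | t ⊑ c}`. -/
def cyl (t : List ℕ) : Set NStar := {c | PrefixOf t c}

/-- The smallest topology in which every `{t}` and every `N_t` is clopen. -/
instance : TopologicalSpace NStar :=
  TopologicalSpace.generateFrom
    {S | ∃ t : List ℕ, S = {fin t} ∨ S = ({fin t} : Set NStar)ᶜ ∨ S = cyl t ∨ S = (cyl t)ᶜ}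

def IsFin (c : NStar) : Prop := ∃ t, c = fin t
def IsInf (c : NStar) : Prop := ∃ b, c = inf b
def IsLim (c : NStar) : Prop := ∃ t, c = lim t

/-- The extension of `π : ℕ^{<ℕ} → ℕ^{<ℕ}` to `ℕ^{≤ℕ}_*`. -/
def hat (π : List ℕ → List ℕ) : NStar → NStar
  | fin t => fin (π t)
  | inf b => inf (limSeq π b)
  | lim t => lim (π t)

end NStar

/-- `ℕ^ℕ_* = ℕ^{≤ℕ}_* ∖ ℕ^{<ℕ}`. -/
abbrev NNStar : Type := {c : NStar // ¬ c.IsFin}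
/-- `ℕ^ℕ_* ∖ ℕ^ℕ = {t⌢⟨∞⟩ : t ∈ ℕ^{<ℕ}}`. -/
abbrev NLim : Type := {c : NStar // c.IsLim}
/-- The copy of `ℕ^{<ℕ}` inside `ℕ^{≤ℕ}_*` (a discrete subspace). -/
abbrev NFin : Type := {c : NStar // c.IsFin}
/-- `ℕ^{≤ℕ} = ℕ^{<ℕ} ∪ ℕ^ℕ`. -/
abbrev NFinInf : Type := {c : NStar // ¬ c.IsLim}
/-- `ℕ^{≤ℕ}_* ∖ ℕ^ℕ`. -/
abbrev NFinLim : Type := {c : NStar // ¬ c.IsInf}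

def infPt (b : ℕ → ℕ) : NNStar :=
  ⟨NStar.inf b, by rintro ⟨t, h⟩; exact NStar.noConfusion h⟩

def limPt (t : List ℕ) : NLim := ⟨NStar.lim t, t, rfl⟩

def finPt (t : List ℕ) : NFin := ⟨NStar.fin t, t, rfl⟩

/-- The extension `π̂` restricted to `ℕ^ℕ_*`. -/
def hatNN (π : List ℕ → List ℕ) (c : NNStar) : NNStar :=
  ⟨c.1.hat π, by
    obtain ⟨c, hc⟩ := c
    cases c with
    | fin t => exact fun _ => hc ⟨t, rfl⟩
    | inf b => rintro ⟨t, h⟩; exact NStar.noConfusion h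
    | lim t => rintro ⟨s, h⟩; exact NStar.noConfusion h⟩

/-- The extension `π̂` restricted to `ℕ^ℕ_* ∖ ℕ^ℕ`. -/
def hatLim (π : List ℕ → List ℕ) (c : NLim) : NLim :=
  ⟨c.1.hat π, by obtain ⟨c, t, rfl⟩ := c; exact ⟨π t, rfl⟩⟩

def NLim.toNN (c : NLim) : NNStar :=
  ⟨c.1, by obtain ⟨c, t, rfl⟩ := c; rintro ⟨s, h⟩; exact NStar.noConfusion h⟩

def NLim.base (c : NLim) : List ℕ :=
  match c.1 with
  | .lim t => t
  | .fin t => t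
  | .inf _ => []

/-- The map `p : t⌢⟨∞⟩ ↦ t`, with values in the discrete copy of `ℕ^{<ℕ}`. -/
def pFin (c : NLim) : NFin := finPt c.base

def NFin.toFinLim (c : NFin) : NFinLim :=
  ⟨c.1, by obtain ⟨c, t, rfl⟩ := c; rintro ⟨b, h⟩; exact NStar.noConfusion h⟩

def NFin.toFinInf (c : NFin) : NFinInf :=
  ⟨c.1, by obtain ⟨c, t, rfl⟩ := c; rintro ⟨s, h⟩; exact NStar.noConfusion h⟩

/-- A closed continuous embedding of `φ` into `φ'`: a pair of injective continuous closed
maps `πX : X → X'` and `πY : cl(φ[X]) → cl(φ'[X'])` with `φ' ∘ πX = πY ∘ φ`. -/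
def ClosedContinuousEmbedding {X Y X' Y' : Type*} [TopologicalSpace X] [TopologicalSpace Y]
    [TopologicalSpace X'] [TopologicalSpace Y'] (φ : X → Y) (φ' : X' → Y') : Prop :=
  ∃ (πX : X → X') (πY : closure (Set.range φ) → closure (Set.range φ')),
    Continuous πX ∧ Function.Injective πX ∧ IsClosedMap πX ∧
    Continuous πY ∧ Function.Injective πY ∧ IsClosedMap πY ∧
    ∀ x : X, φ' (πX x) = (πY ⟨φ x, subset_closure ⟨x, rfl⟩⟩ : Y')

/-- A topological space is analytic if it is a continuous image of a closed subset of `ℕ^ℕ`. -/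
def IsAnalytic (X : Type*) [TopologicalSpace X] : Prop :=
  ∃ C : Set (ℕ → ℕ), IsClosed C ∧ ∃ f : C → X, Continuous f ∧ Function.Surjective f

/-- Baire measurable: preimages of open sets have the Baire property. -/
def BaireMeasurableFun {X Y : Type*} [TopologicalSpace X] [TopologicalSpace Y]
    (φ : X → Y) : Prop :=
  ∀ V : Set Y, IsOpen V → ∃ U : Set X, IsOpen U ∧ IsMeagre (symmDiff (φ ⁻¹' V) U)

/-- Baire class one: preimages of open sets are `Fσ`. -/
def BaireClassOneFun {X Y : Type*} [TopologicalSpace X] [TopologicalSpace Y]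
    (φ : X → Y) : Prop :=
  ∀ V : Set Y, IsOpen V → ∃ F : ℕ → Set X, (∀ n, IsClosed (F n)) ∧ φ ⁻¹' V = ⋃ n, F n

/-- σ-continuous with closed witnesses. -/
def SigmaContClosed {X Y : Type*} [TopologicalSpace X] [TopologicalSpace Y]
    (φ : X → Y) : Prop :=
  ∃ F : ℕ → Set X, (∀ n, IsClosed (F n)) ∧ (⋃ n, F n) = Set.univ ∧ ∀ n, ContinuousOn φ (F n)

/-- Borel: preimages of open sets are Borel. -/
def BorelFun {X Y : Type*} [TopologicalSpace X] [TopologicalSpace Y] (φ : X → Y) : Prop :=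
  ∀ V : Set Y, IsOpen V → @MeasurableSet X (borel X) (φ ⁻¹' V)

/-- The function on `ℕ^ℕ_*` agreeing with `f` on `ℕ^ℕ` and with `g` on `ℕ^ℕ_* ∖ ℕ^ℕ`,
with values in the topological disjoint union. -/
def combine2 {A B : Type*} (f : (ℕ → ℕ) → A) (g : NLim → B) : NNStar → A ⊕ B := fun c =>
  match c with
  | ⟨.fin t, h⟩ => absurd ⟨t, rfl⟩ h
  | ⟨.inf b, _⟩ => Sum.inl (f b)
  | ⟨.lim t, _⟩ => Sum.inr (g (limPt t))

lemma listMeet_nil_right (s : List ℕ) : listMeet s [] = [] := by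
  cases s <;> rfl

lemma listMeet_append (u s t : List ℕ) :
    listMeet (u ++ s) (u ++ t) = u ++ listMeet s t := by
  induction u with
  | nil => rfl
  | cons a u ih => simp [listMeet, ih]

lemma listMeet_of_prefix {s t : List ℕ} (h : s <+: t) : listMeet s t = s := by
  obtain ⟨r, rfl⟩ := h
  have := listMeet_append s [] r
  simpa [listMeet] using this

lemma listMeet_of_prefix' {s t : List ℕ} (h : t <+: s) : listMeet s t = t := by
  obtain ⟨r, rfl⟩ := h
  have := listMeet_append t r []
  simpa [listMeet, listMeet_nil_right] using this

lemma listMeet_prefix_left (s t : List ℕ) : listMeet s t <+: s := by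
  induction s generalizing t with
  | nil => cases t <;> simp [listMeet]
  | cons a s ih =>
    cases t with
    | nil => simp [listMeet]
    | cons b t =>
      by_cases hab : a = b
      · simpa [listMeet, hab] using ih t
      · simp [listMeet, hab]

lemma listMeet_branch {n m : ℕ} (w x y : List ℕ) (hnm : n ≠ m) :
    listMeet (w ++ n :: x) (w ++ m :: y) = w := by
  have := listMeet_append w (n :: x) (m :: y)
  simpa [listMeet, hnm] using this

lemma listMeet_comm (s t : List ℕ) : listMeet s t = listMeet t s := by
  induction s generalizing t with
  | nil => cases t <;> rfl
  | cons a s ih =>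
    cases t with
    | nil => rfl
    | cons b t =>
      by_cases hab : a = b
      · subst hab; simp [listMeet, ih]
      · simp [listMeet, hab, Ne.symm hab]

/-- Trichotomy for the meet of two finite sequences. -/
lemma meet_trichotomy (s t : List ℕ) :
    s <+: t ∨ t <+: s ∨
      ∃ u n m x y, n ≠ m ∧ s = u ++ n :: x ∧ t = u ++ m :: y ∧ listMeet s t = u := by
  induction s generalizing t with
  | nil => exact Or.inl (List.nil_prefix)
  | cons a s ih =>
    cases t with
    | nil => exact Or.inr (Or.inl (List.nil_prefix))
    | cons b t =>
      by_cases hab : a = b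
      · subst hab
        rcases ih t with h | h | ⟨u, n, m, x, y, hnm, hs, ht, hm⟩
        · exact Or.inl (by simpa using h)
        · exact Or.inr (Or.inl (by simpa using h))
        · refine Or.inr (Or.inr ⟨a :: u, n, m, x, y, hnm, by simp [hs], by simp [ht], ?_⟩)
          simp [listMeet, hm]
      · exact Or.inr (Or.inr ⟨[], a, b, s, t, hab, rfl, rfl, by simp [listMeet, hab]⟩)

/-- Recursive choice construction: `piAux e r` applies `e` along the reversed list. -/
def piAux (e : List ℕ → List ℕ) : List ℕ → List ℕ
  | [] => e []
  | n :: r => e (piAux e r ++ [n])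

lemma piAux_mono (e : List ℕ → List ℕ) (he : ∀ u, u <+: e u) (r' r : List ℕ) :
    piAux e r <+: piAux e (r' ++ r) := by
  induction r' with
  | nil => simp
  | cons a r' ih =>
    refine ih.trans ?_
    refine (List.prefix_append _ [a]).trans ?_
    exact he _

/-- Ramsey-type property for `∧`-embeddings. -/
theorem stmt_7 (T : Set (List ℕ)) :
    ∃ π : List ℕ → List ℕ, MeetEmbedding π ∧
      (Set.range π ⊆ T ∨ Set.range π ⊆ Tᶜ) := by
  by_cases H : ∃ u : List ℕ, ∀ t, u <+: t → t ∈ T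
  · -- all extensions of u lie in T; embed via `u ++ ·`
    obtain ⟨u, hu⟩ := H
    refine ⟨fun s => u ++ s, ⟨fun s t h => by simpa using h, fun s t => (listMeet_append u s t).symm⟩, Or.inl ?_⟩
    rintro _ ⟨s, rfl⟩
    exact hu _ (List.prefix_append u s)
  · -- Tᶜ is dense above every node
    push_neg at H
    choose e he1 he2 using fun u => H u
    set π : List ℕ → List ℕ := fun s => piAux e s.reverse with hπ
    have hmono : ∀ {s t : List ℕ}, s <+: t → π s <+: π t := by
      rintro s t ⟨r, rfl⟩
      simp only [hπ, List.reverse_append]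
      exact piAux_mono e he1 _ _
    have hsnoc : ∀ (s : List ℕ) (n : ℕ), π (s ++ [n]) = e (π s ++ [n]) := by
      intro s n
      simp [hπ, piAux]
    have hbranch : ∀ {u s : List ℕ} {n : ℕ}, u ++ [n] <+: s → π u ++ [n] <+: π s := by
      intro u s n h
      refine List.IsPrefix.trans ?_ (hmono h)
      rw [hsnoc]
      exact he1 _
    have hmeet : ∀ s t, π (listMeet s t) = listMeet (π s) (π t) := by
      intro s t
      rcases meet_trichotomy s t with h | h | ⟨u, n, m, x, y, hnm, rfl, rfl, hu⟩
      · rw [listMeet_of_prefix h, listMeet_of_prefix (hmono h)]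
      · rw [listMeet_of_prefix' h, listMeet_of_prefix' (hmono h)]
      · rw [hu]
        obtain ⟨x', hx'⟩ := hbranch (u := u) (n := n) (s := u ++ n :: x) ⟨x, by simp⟩
        obtain ⟨y', hy'⟩ := hbranch (u := u) (n := m) (s := u ++ m :: y) ⟨y, by simp⟩
        have hx'' : π (u ++ n :: x) = π u ++ n :: x' := by rw [← hx']; simp
        have hy'' : π (u ++ m :: y) = π u ++ m :: y' := by rw [← hy']; simp
        rw [hx'', hy'', listMeet_branch _ _ _ hnm]
    have hinj : Function.Injective π := by
      intro s t h
      by_contra hne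
      have hu : π (listMeet s t) = π s := by
        rw [hmeet, h, listMeet_of_prefix (List.prefix_refl _)]
      have h1 : listMeet s t <+: s := listMeet_prefix_left s t
      have h2 : listMeet s t <+: t := by
        rw [listMeet_comm]; exact listMeet_prefix_left t s
      have hlen : ∀ {w : List ℕ}, listMeet s t <+: w → listMeet s t ≠ w →
          (π (listMeet s t)).length < (π w).length := by
        rintro w ⟨r, rfl⟩ hne'
        cases r with
        | nil => simp at hne'
        | cons c r' =>
          have hb := hbranch (u := listMeet s t) (n := c)
            (s := listMeet s t ++ c :: r') ⟨r', by simp⟩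
          have hl := hb.length_le
          simp at hl; omega
      rcases eq_or_ne (listMeet s t) s with hus | hus
      · rcases eq_or_ne (listMeet s t) t with hut | hut
        · exact hne (hus.symm.trans hut)
        · have hlt := hlen h2 hut
          rw [hu, h] at hlt
          exact lt_irrefl _ hlt
      · have hlt := hlen h1 hus
        rw [hu] at hlt
        exact lt_irrefl _ hlt
    refine ⟨π, ⟨hinj, hmeet⟩, Or.inr ?_⟩
    rintro _ ⟨s, rfl⟩
    cases hs : s.reverse with
    | nil => simpa [hπ, hs, piAux] using he2 []
    | cons a r => simpa [hπ, hs, piAux] using he2 (piAux e r ++ [a])
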